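/- For every fixed integer M ≥ 3, the average effective resistance of the d-dimensional toroidal grid is Θ(1/d) as d → ∞: there exist constants c > 0 and C > 0 such that for all integers d ≥ 3, c/d ≤ M^{-d} Σ_{k ∈ {0,...,M-1}^d, k ≠ 0} (2d - 2 Σ_{i=1}^d cos(2π k_i / M))^{-1} ≤ C/d. -/

import Mathlib

open Real Finset

/-- Average effective resistance of the `d`-dimensional toroidal grid `T_{M^d}`
(spectral formula). -/
noncomputable def RaveTorus (d M : ℕ) : ℝ :=
  (1 / (M : ℝ) ^ d) *
    ∑ k ∈ (Fintype.piFinset fun _ : Fin d => Finset.range M).filter (· ≠ 0),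
      (2 * d - 2 * ∑ i, Real.cos (2 * π * k i / M))⁻¹

/-!
The eigenvalue of the torus Laplacian at `k` is `λ k = ∑ i, (2 - 2 cos (2π kᵢ / M))`, a sum of
cycle eigenvalues, each in `[0, 4]` and at least the spectral gap `δ = 2 - 2 cos (2π / M)` when
`kᵢ ≠ 0`. So `λ k ≤ 4d`, which gives the lower bound, and `λ k ≥ δ · s(k)` with `s(k)` the number
of nonzero coordinates, whence `(λ k)⁻¹ ≤ (2 / δ) / (s(k) + 1)`. Writing `1 / (s + 1) = ∫₀¹ xˢ`,
the sum of `1 / (s(k) + 1)` over `{0, …, M-1}ᵈ` is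
`∫₀¹ (1 + (M - 1) x)ᵈ = (M ^ (d+1) - 1) / ((M - 1)(d + 1)) = O(Mᵈ / d)`.
-/

lemma cos_le_cos_of_le_of_le_two_pi_sub {t x : ℝ} (ht : 0 ≤ t) (htx : t ≤ x)
    (hxt : x ≤ 2 * π - t) : cos x ≤ cos t := by
  rcases le_total x π with hxπ | hπx
  · exact cos_le_cos_of_nonneg_of_le_pi ht hxπ htx
  · rw [← cos_two_pi_sub x]
    exact cos_le_cos_of_nonneg_of_le_pi ht (by linarith) (by linarith)

/-- The Laplacian eigenvalues of the cycle on `ZMod M`; those of the torus are their sums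
over the coordinates. -/
noncomputable def cycleEigenvalue (M a : ℕ) : ℝ := 2 - 2 * cos (2 * π * a / M)

section CycleEigenvalue

variable {M : ℕ}

lemma cycleEigenvalue_nonneg (a : ℕ) : 0 ≤ cycleEigenvalue M a := by
  unfold cycleEigenvalue
  linarith [cos_le_one (2 * π * a / M)]

lemma cycleEigenvalue_le_four (a : ℕ) : cycleEigenvalue M a ≤ 4 := by
  unfold cycleEigenvalue
  linarith [neg_one_le_cos (2 * π * a / M)]

lemma cycleEigenvalue_one_pos (hM : 2 ≤ M) : 0 < cycleEigenvalue M 1 := by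
  have hM' : (2 : ℝ) ≤ M := by exact_mod_cast hM
  have h2π : 2 * π / M ≤ π := by
    rw [div_le_iff₀ (by linarith)]; nlinarith [pi_pos]
  have := cos_lt_cos_of_nonneg_of_le_pi le_rfl h2π (by positivity)
  rw [cos_zero] at this
  simp only [cycleEigenvalue, Nat.cast_one, mul_one]
  linarith

lemma cycleEigenvalue_one_le {a : ℕ} (ha : a ≠ 0) (haM : a < M) :
    cycleEigenvalue M 1 ≤ cycleEigenvalue M a := by
  have hM : (0 : ℝ) < M := by exact_mod_cast (Nat.pos_of_ne_zero ha).trans haM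
  have ha1 : (1 : ℝ) ≤ a := by exact_mod_cast Nat.one_le_iff_ne_zero.mpr ha
  have haM1 : (a : ℝ) + 1 ≤ M := by exact_mod_cast haM
  have key : cos (2 * π * a / M) ≤ cos (2 * π / M) := by
    apply cos_le_cos_of_le_of_le_two_pi_sub (by positivity)
    · gcongr ?_ / _; nlinarith [pi_pos]
    · rw [div_le_iff₀ hM, sub_mul, div_mul_cancel₀ _ hM.ne']; nlinarith [pi_pos]
  simp only [cycleEigenvalue, Nat.cast_one, mul_one]
  linarith

lemma cycleEigenvalue_pos {a : ℕ} (ha : a ≠ 0) (haM : a < M) : 0 < cycleEigenvalue M a :=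
  (cycleEigenvalue_one_pos (by omega)).trans_le (cycleEigenvalue_one_le ha haM)

end CycleEigenvalue

section SupportCount

variable {ι : Type*} [Fintype ι] [DecidableEq ι]

lemma sum_pow_card_ne_zero_piFinset_range {M : ℕ} (hM : 0 < M) (x : ℝ) :
    ∑ k ∈ Fintype.piFinset (fun _ : ι => range M), x ^ #{i | k i ≠ 0} =
      (1 + ((M : ℝ) - 1) * x) ^ Fintype.card ι := by
  have hprod (k : ι → ℕ) : x ^ #{i | k i ≠ 0} = ∏ i, if k i = 0 then 1 else x := by
    simp [prod_ite, prod_const]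
  have hsum : ∑ a ∈ range M, (if a = 0 then 1 else x) = 1 + ((M : ℝ) - 1) * x := by
    rw [sum_ite, filter_eq', filter_ne', if_pos (mem_range.mpr hM), sum_const, sum_const,
      card_erase_of_mem (mem_range.mpr hM), card_range]
    simp [Nat.cast_pred hM]
  simp_rw [hprod]
  rw [sum_prod_piFinset (range M) fun _ a => if a = 0 then 1 else x,
    prod_congr rfl fun i _ => hsum, prod_const, card_univ]

lemma sum_inv_card_ne_zero_add_one_piFinset_range {M : ℕ} (hM : 1 < M) :
    ∑ k ∈ Fintype.piFinset (fun _ : ι => range M), ((#{i | k i ≠ 0} : ℝ) + 1)⁻¹ =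
      ((M : ℝ) ^ (Fintype.card ι + 1) - 1) / (((M : ℝ) - 1) * (Fintype.card ι + 1)) := by
  have hc : (M : ℝ) - 1 ≠ 0 := sub_ne_zero.mpr (by exact_mod_cast hM.ne')
  have hint (n : ℕ) : ((n : ℝ) + 1)⁻¹ = ∫ x in (0 : ℝ)..1, x ^ n := by simp [integral_pow]
  simp_rw [hint]
  rw [← intervalIntegral.integral_finsetSum fun k _ => (continuous_pow _).intervalIntegrable 0 1]
  simp_rw [sum_pow_card_ne_zero_piFinset_range (zero_lt_one.trans hM)]
  rw [intervalIntegral.integral_comp_add_mul (fun y => y ^ Fintype.card ι) hc 1, integral_pow,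
    smul_eq_mul]
  field_simp
  ring

lemma mem_filter_ne_zero_piFinset_range {M : ℕ} {k : ι → ℕ} :
    k ∈ (Fintype.piFinset fun _ : ι => range M).filter (· ≠ 0) ↔ (∀ i, k i < M) ∧ k ≠ 0 := by
  simp

lemma card_filter_ne_zero_piFinset_range {M : ℕ} (hM : 0 < M) :
    #((Fintype.piFinset fun _ : ι => range M).filter (· ≠ 0)) = M ^ Fintype.card ι - 1 := by
  rw [filter_ne', card_erase_of_mem (by simpa using fun _ => hM), Fintype.card_piFinset,
    prod_const, card_range, card_univ]

end SupportCount

section TorusEigenvalue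

variable {ι : Type*} [Fintype ι] {M : ℕ} {k : ι → ℕ}

lemma sum_cycleEigenvalue_le (k : ι → ℕ) :
    ∑ i, cycleEigenvalue M (k i) ≤ 4 * Fintype.card ι := by
  simpa [mul_comm] using sum_le_card_nsmul univ _ 4 fun i _ => cycleEigenvalue_le_four (k i)

lemma cycleEigenvalue_one_mul_card_ne_zero_le_sum (hk : ∀ i, k i < M) :
    cycleEigenvalue M 1 * #{i | k i ≠ 0} ≤ ∑ i, cycleEigenvalue M (k i) :=
  calc cycleEigenvalue M 1 * #{i | k i ≠ 0} = #{i | k i ≠ 0} • cycleEigenvalue M 1 := by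
        rw [nsmul_eq_mul, mul_comm]
    _ ≤ ∑ i ∈ {i | k i ≠ 0}, cycleEigenvalue M (k i) :=
        card_nsmul_le_sum _ _ _ fun i hi => cycleEigenvalue_one_le (mem_filter.mp hi).2 (hk i)
    _ ≤ ∑ i, cycleEigenvalue M (k i) :=
        sum_le_sum_of_subset_of_nonneg (filter_subset _ _) fun i _ _ => cycleEigenvalue_nonneg _

lemma sum_cycleEigenvalue_pos (hk : ∀ i, k i < M) (hk0 : k ≠ 0) :
    0 < ∑ i, cycleEigenvalue M (k i) := by
  obtain ⟨i, hi : k i ≠ 0⟩ := Function.ne_iff.mp hk0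
  exact sum_pos' (fun _ _ => cycleEigenvalue_nonneg _)
    ⟨i, mem_univ _, cycleEigenvalue_pos hi (hk i)⟩

lemma inv_sum_cycleEigenvalue_le (hk : ∀ i, k i < M) (hk0 : k ≠ 0) :
    (∑ i, cycleEigenvalue M (k i))⁻¹ ≤
      2 / cycleEigenvalue M 1 * ((#{i | k i ≠ 0} : ℝ) + 1)⁻¹ := by
  obtain ⟨i, hi : k i ≠ 0⟩ := Function.ne_iff.mp hk0
  have hδ : 0 < cycleEigenvalue M 1 := cycleEigenvalue_one_pos (by have := hk i; omega)
  have hJ : (1 : ℝ) ≤ #{i | k i ≠ 0} := by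
    exact_mod_cast card_pos.mpr ⟨i, mem_filter.mpr ⟨mem_univ _, hi⟩⟩
  calc (∑ i, cycleEigenvalue M (k i))⁻¹ ≤ (cycleEigenvalue M 1 * #{i | k i ≠ 0})⁻¹ :=
        inv_anti₀ (by positivity) (cycleEigenvalue_one_mul_card_ne_zero_le_sum hk)
    _ ≤ 2 / cycleEigenvalue M 1 * ((#{i | k i ≠ 0} : ℝ) + 1)⁻¹ := by
        rw [div_mul_eq_mul_div, ← div_eq_mul_inv, le_div_iff₀ (by positivity)]
        field_simp
        linarith

end TorusEigenvalue

section RaveTorus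

variable {d M : ℕ}

lemma two_mul_sub_two_mul_sum_cos_eq_sum_cycleEigenvalue (k : Fin d → ℕ) :
    2 * d - 2 * ∑ i, cos (2 * π * k i / M) = ∑ i, cycleEigenvalue M (k i) := by
  simp only [cycleEigenvalue, sum_sub_distrib, ← mul_sum, sum_const, card_univ,
    Fintype.card_fin, nsmul_eq_mul]
  ring

lemma raveTorus_eq_sum_cycleEigenvalue :
    RaveTorus d M = ((M : ℝ) ^ d)⁻¹ *
      ∑ k ∈ (Fintype.piFinset fun _ : Fin d => range M).filter (· ≠ 0),
        (∑ i, cycleEigenvalue M (k i))⁻¹ := by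
  simp only [RaveTorus, one_div, two_mul_sub_two_mul_sum_cos_eq_sum_cycleEigenvalue]

lemma one_div_eight_div_le_raveTorus (hM : 2 ≤ M) (hd : 0 < d) : 1 / 8 / d ≤ RaveTorus d M := by
  have hd' : (0 : ℝ) < d := by exact_mod_cast hd
  have hMd : (2 : ℝ) ≤ (M : ℝ) ^ d := by
    exact_mod_cast hM.trans (Nat.le_self_pow hd.ne' M)
  have hsum : ((M : ℝ) ^ d - 1) * (4 * (d : ℝ))⁻¹ ≤
      ∑ k ∈ (Fintype.piFinset fun _ : Fin d => range M).filter (· ≠ 0),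
        (∑ i, cycleEigenvalue M (k i))⁻¹ := by
    have hcard := card_filter_ne_zero_piFinset_range (ι := Fin d) (by omega : 0 < M)
    rw [Fintype.card_fin] at hcard
    rw [← Nat.cast_pow, ← Nat.cast_pred (by positivity), ← hcard, ← nsmul_eq_mul]
    refine card_nsmul_le_sum _ _ _ fun k hk => ?_
    obtain ⟨hkM, hk0⟩ := mem_filter_ne_zero_piFinset_range.mp hk
    refine inv_anti₀ (sum_cycleEigenvalue_pos hkM hk0) ?_
    simpa using sum_cycleEigenvalue_le (M := M) k
  calc 1 / 8 / d ≤ ((M : ℝ) ^ d)⁻¹ * (((M : ℝ) ^ d - 1) * (4 * (d : ℝ))⁻¹) := by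
        field_simp
        linarith
    _ ≤ RaveTorus d M := by
        rw [raveTorus_eq_sum_cycleEigenvalue]
        gcongr

lemma raveTorus_le_four_div_cycleEigenvalue_one_div (hM : 2 ≤ M) (hd : 0 < d) :
    RaveTorus d M ≤ 4 / cycleEigenvalue M 1 / d := by
  set δ := cycleEigenvalue M 1
  have hδ : 0 < δ := cycleEigenvalue_one_pos hM
  have hd' : (0 : ℝ) < d := by exact_mod_cast hd
  have hM' : (2 : ℝ) ≤ M := by exact_mod_cast hM
  have hsum : ∑ k ∈ (Fintype.piFinset fun _ : Fin d => range M).filter (· ≠ 0),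
      (∑ i, cycleEigenvalue M (k i))⁻¹ ≤ 2 / δ * (((M : ℝ) ^ (d + 1) - 1) / ((M - 1) * (d + 1))) :=
    calc _ ≤ ∑ k ∈ (Fintype.piFinset fun _ : Fin d => range M).filter (· ≠ 0),
          2 / δ * ((#{i | k i ≠ 0} : ℝ) + 1)⁻¹ := sum_le_sum fun k hk =>
            inv_sum_cycleEigenvalue_le (mem_filter_ne_zero_piFinset_range.mp hk).1
              (mem_filter_ne_zero_piFinset_range.mp hk).2
      _ ≤ ∑ k ∈ Fintype.piFinset fun _ : Fin d => range M,
          2 / δ * ((#{i | k i ≠ 0} : ℝ) + 1)⁻¹ :=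
            sum_le_sum_of_subset_of_nonneg (filter_subset _ _) fun _ _ _ => by positivity
      _ = 2 / δ * (((M : ℝ) ^ (d + 1) - 1) / ((M - 1) * (d + 1))) := by
            rw [← mul_sum, sum_inv_card_ne_zero_add_one_piFinset_range hM, Fintype.card_fin]
  calc RaveTorus d M
        ≤ ((M : ℝ) ^ d)⁻¹ * (2 / δ * (((M : ℝ) ^ (d + 1) - 1) / ((M - 1) * (d + 1)))) := by
        rw [raveTorus_eq_sum_cycleEigenvalue]
        gcongr
    _ ≤ 4 / δ / d := by
        have hM1 : (0 : ℝ) < M - 1 := by linarith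
        rw [div_div, le_div_iff₀ (by positivity)]
        have hX := pow_pos (by linarith : (0 : ℝ) < M) d
        field_simp
        rw [pow_succ]
        nlinarith [mul_nonneg (mul_nonneg hX.le hd'.le) (by linarith : (0 : ℝ) ≤ M - 2),
          mul_pos hX hM1]

end RaveTorus

theorem torus_resistance_theta_one_over_d (M : ℕ) (hM : 3 ≤ M) :
    ∃ c C : ℝ, 0 < c ∧ 0 < C ∧
      ∀ d : ℕ, 3 ≤ d → c / d ≤ RaveTorus d M ∧ RaveTorus d M ≤ C / d :=
  ⟨1 / 8, 4 / cycleEigenvalue M 1, by norm_num,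
    div_pos four_pos (cycleEigenvalue_one_pos (by omega)),
    fun d hd => ⟨one_div_eight_div_le_raveTorus (by omega) (by omega),
      raveTorus_le_four_div_cycleEigenvalue_one_div (by omega) (by omega)⟩⟩
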